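/- (Corollary to Theorem 2.1, q-case: covariance of the q-trinomial distribution of the first kind.) Let n ≥ 1 be a natural number and α₁, α₂ ∈ (0,1). Define E₁ := ∑_{y₁+y₂≤n} [y₁]_q·f(y₁,y₂), E₂ := ∑_{y₁+y₂≤n} [y₂]_q·f(y₁,y₂), and E₁₂ := ∑_{y₁+y₂≤n} [y₁]_q·[y₂]_q·f(y₁,y₂), each sum ranging over pairs of natural numbers (y₁,y₂) with y₁ + y₂ ≤ n. Then the covariance satisfies E₁₂ − E₁·E₂ = α₁·α₂·[n]_q·([n−1]_q − [n]_q) / ( (1+α₁)·(1+α₂)·(1+α₁·q^{n−1}) ). -/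

import Mathlib

open Finset

/-- q-integer `[k]_q = (1 - q^k)/(1 - q)`. -/
noncomputable def qInt (q : ℝ) (k : ℤ) : ℝ := (1 - q ^ k) / (1 - q)

/-- q-factorial `[n]_q! = ∏_{i=1}^n [i]_q`. -/
noncomputable def qFact (q : ℝ) (n : ℕ) : ℝ := ∏ i ∈ Finset.Icc 1 n, qInt q (i : ℤ)

/-- q-binomial coefficient `C_q(n,k)`. -/
noncomputable def qBinom (q : ℝ) (n k : ℕ) : ℝ := qFact q n / (qFact q k * qFact q (n - k))

/-- q-falling factorial `[u]_{m,q} = ∏_{i=1}^m [u-i+1]_q`. -/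
noncomputable def qFall (q : ℝ) (u : ℤ) (m : ℕ) : ℝ := ∏ i ∈ Finset.Icc 1 m, qInt q (u - (i : ℤ) + 1)

/-- `[k]_{q⁻¹} = q^{1-k} · [k]_q`. -/
noncomputable def qIntInv (q : ℝ) (k : ℤ) : ℝ := q ^ (1 - k) * qInt q k

/-- `[u]_{m,q⁻¹} = ∏_{i=1}^m [u-i+1]_{q⁻¹}`. -/
noncomputable def qFallInv (q : ℝ) (u : ℤ) (m : ℕ) : ℝ := ∏ i ∈ Finset.Icc 1 m, qIntInv q (u - (i : ℤ) + 1)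

/-- `b(k) = k(k-1)/2`. -/
def bb (k : ℕ) : ℕ := k * (k - 1) / 2

/-- `⟨1 ⊕ α⟩_m = ∏_{i=1}^m (1 + α q^{i-1})`. -/
noncomputable def oplus (q α : ℝ) (m : ℕ) : ℝ := ∏ i ∈ Finset.Icc 1 m, (1 + α * q ^ (i - 1))

/-- `⟨1 ⊖ β⟩_m = ∏_{i=1}^m (1 - β q^{i-1})`. -/
noncomputable def ominus (q β : ℝ) (m : ℕ) : ℝ := ∏ i ∈ Finset.Icc 1 m, (1 - β * q ^ (i - 1))

/-- q-trinomial coefficient `T_q(n; x₁, x₂)`. -/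
noncomputable def qTri (q : ℝ) (n x1 x2 : ℕ) : ℝ :=
  qFact q n / (qFact q x1 * qFact q x2 * qFact q (n - x1 - x2))

/-- pmf of the q-trinomial distribution of the first kind. -/
noncomputable def fpmf (q a1 a2 : ℝ) (n y1 y2 : ℕ) : ℝ :=
  qTri q n y1 y2 * a1 ^ y1 * a2 ^ y2 * q ^ (bb y1 + bb y2) /
    (oplus q a1 n * oplus q a2 (n - y1))

/-! The pmf factors as `f(y₁, y₂) = p(α₁, n, y₁) · p(α₂, n - y₁, y₂)`, where
`p(η, m, x) = C_q(m, x) η^x q^{b(x)} / ⟨1 ⊕ η⟩_m` is the q-binomial distribution of the first kind,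
normalised by the q-binomial theorem `∑ₓ C_q(m, x) η^x q^{b(x)} = ⟨1 ⊕ η⟩_m`. The absorption
identities `[x]_q C_q(m, x) = [m]_q C_q(m - 1, x - 1)` and `[m - x]_q C_q(m, x) = [m]_q C_q(m - 1, x)`
turn the moments of `[y₂]_q`, `[n - y₁]_q` and `[y₁]_q [n - y₁]_q` into such normalising sums with
shifted parameters, which gives `E₁ = α₁ [n]_q / (1 + α₁)`,
`E₂ = α₂ [n]_q / ((1 + α₂)(1 + α₁ q^{n-1}))` and
`E₁₂ = α₁ α₂ [n]_q [n-1]_q / ((1 + α₁)(1 + α₂)(1 + α₁ q^{n-1}))`. -/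

section QBinomialDistribution

variable {q : ℝ}

lemma qInt_natCast (q : ℝ) (k : ℕ) : qInt q k = (1 - q ^ k) / (1 - q) := by
  simp [qInt]

lemma qInt_zero (q : ℝ) : qInt q 0 = 0 := by
  simp [qInt]

lemma qInt_add (q : ℝ) (a b : ℕ) : qInt q (a + b : ℕ) = qInt q b + q ^ b * qInt q a := by
  simp only [qInt_natCast]
  ring

lemma qInt_pos (hq0 : 0 ≤ q) (hq1 : q < 1) {k : ℕ} (hk : k ≠ 0) : 0 < qInt q k := by
  rw [qInt_natCast]
  have : q ^ k < 1 := pow_lt_one₀ hq0 hq1 hk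
  exact div_pos (by linarith) (by linarith)

lemma qFact_zero (q : ℝ) : qFact q 0 = 1 := by
  simp [qFact]

lemma qFact_succ (q : ℝ) (m : ℕ) : qFact q (m + 1) = qFact q m * qInt q (m + 1 : ℕ) := by
  rw [qFact, prod_Icc_succ_top (by omega)]
  rfl

lemma qFact_pos (hq0 : 0 ≤ q) (hq1 : q < 1) (m : ℕ) : 0 < qFact q m :=
  prod_pos fun i hi => qInt_pos hq0 hq1 (by have := (mem_Icc.mp hi).1; omega)

lemma qBinom_zero_right (hq0 : 0 ≤ q) (hq1 : q < 1) (m : ℕ) : qBinom q m 0 = 1 := by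
  rw [qBinom, qFact_zero, one_mul, Nat.sub_zero, div_self (qFact_pos hq0 hq1 m).ne']

lemma qBinom_self (hq0 : 0 ≤ q) (hq1 : q < 1) (m : ℕ) : qBinom q m m = 1 := by
  rw [qBinom, Nat.sub_self, qFact_zero, mul_one, div_self (qFact_pos hq0 hq1 m).ne']

lemma qBinom_succ_succ (hq0 : 0 ≤ q) (hq1 : q < 1) {m x : ℕ} (hx : x < m) :
    qBinom q (m + 1) (x + 1) = qBinom q m (x + 1) + q ^ (m - x) * qBinom q m x := by
  obtain ⟨d, rfl⟩ := Nat.exists_eq_add_of_lt hx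
  have hF := qFact_pos hq0 hq1
  have hI : ∀ k : ℕ, qInt q (k + 1 : ℕ) ≠ 0 := fun k => (qInt_pos hq0 hq1 k.succ_ne_zero).ne'
  simp only [qBinom, show x + d + 1 + 1 - (x + 1) = d + 1 by omega,
    show x + d + 1 - (x + 1) = d by omega, show x + d + 1 - x = d + 1 by omega]
  rw [qFact_succ q (x + d + 1), qFact_succ q x, qFact_succ q d,
    show x + d + 1 + 1 = (x + 1) + (d + 1) by omega, qInt_add]
  have := hF x; have := hF d; have := hF (x + d + 1); have := hI x; have := hI d
  field_simp

lemma qInt_succ_mul_qBinom_succ_succ (hq0 : 0 ≤ q) (hq1 : q < 1) {m x : ℕ} (hx : x ≤ m) :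
    qInt q (x + 1 : ℕ) * qBinom q (m + 1) (x + 1) = qInt q (m + 1 : ℕ) * qBinom q m x := by
  obtain ⟨d, rfl⟩ := Nat.exists_eq_add_of_le hx
  have hF := qFact_pos hq0 hq1
  simp only [qBinom, show x + d + 1 - (x + 1) = d by omega, show x + d - x = d by omega]
  rw [qFact_succ q (x + d), qFact_succ q x]
  have := hF x; have := hF d; have := hF (x + d); have := qInt_pos hq0 hq1 x.succ_ne_zero
  field_simp

lemma qInt_sub_mul_qBinom_succ (hq0 : 0 ≤ q) (hq1 : q < 1) {m x : ℕ} (hx : x ≤ m) :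
    qInt q (m + 1 - x : ℕ) * qBinom q (m + 1) x = qInt q (m + 1 : ℕ) * qBinom q m x := by
  obtain ⟨d, rfl⟩ := Nat.exists_eq_add_of_le hx
  have hF := qFact_pos hq0 hq1
  simp only [qBinom, show x + d + 1 - x = d + 1 by omega, show x + d - x = d by omega]
  rw [qFact_succ q (x + d), qFact_succ q d]
  have := hF x; have := hF d; have := hF (x + d); have := qInt_pos hq0 hq1 d.succ_ne_zero
  field_simp

lemma bb_succ (x : ℕ) : bb (x + 1) = bb x + x := by
  simp only [bb, ← Nat.choose_two_right, Nat.choose_succ_succ, Nat.choose_one_right, add_comm]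

lemma oplus_eq_prod_range (q η : ℝ) (m : ℕ) : oplus q η m = ∏ j ∈ range m, (1 + η * q ^ j) := by
  rw [oplus, ← Ico_add_one_right_eq_Icc, prod_Ico_eq_prod_range]
  simp

lemma oplus_succ (q η : ℝ) (m : ℕ) : oplus q η (m + 1) = oplus q η m * (1 + η * q ^ m) := by
  simp only [oplus_eq_prod_range, prod_range_succ]

lemma oplus_succ' (q η : ℝ) (m : ℕ) : oplus q η (m + 1) = (1 + η) * oplus q (η * q) m := by
  simp only [oplus_eq_prod_range, prod_range_succ', pow_zero, mul_one, pow_succ', mul_left_comm η,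
    mul_comm, mul_assoc]

lemma oplus_pos (hq0 : 0 ≤ q) {η : ℝ} (hη : 0 ≤ η) (m : ℕ) : 0 < oplus q η m :=
  prod_pos fun _ _ => by positivity

-- `qBinom q m x` is not zero for `x > m` (truncated subtraction), so every sum stops at `x = m`.
noncomputable def qBinomWeight (q η : ℝ) (m x : ℕ) : ℝ := qBinom q m x * η ^ x * q ^ bb x

noncomputable def qBinomPmf (q η : ℝ) (m x : ℕ) : ℝ := qBinomWeight q η m x / oplus q η m

theorem sum_qBinomWeight (hq0 : 0 ≤ q) (hq1 : q < 1) (η : ℝ) (m : ℕ) :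
    ∑ x ∈ range (m + 1), qBinomWeight q η m x = oplus q η m := by
  induction m with
  | zero => simp [qBinomWeight, qBinom_zero_right hq0 hq1, bb, oplus]
  | succ m ih =>
    have hpascal : ∀ x ∈ range m, qBinomWeight q η (m + 1) (x + 1)
        = qBinomWeight q η m (x + 1) + η * q ^ m * qBinomWeight q η m x := by
      intro x hx
      have hxm := mem_range.mp hx
      simp only [qBinomWeight, qBinom_succ_succ hq0 hq1 hxm, bb_succ,
        ← pow_sub_mul_pow q hxm.le]
      ring
    have htop : qBinomWeight q η (m + 1) (m + 1) = η * q ^ m * qBinomWeight q η m m := by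
      simp only [qBinomWeight, qBinom_self hq0 hq1, bb_succ]
      ring
    have hbot : qBinomWeight q η (m + 1) 0 = qBinomWeight q η m 0 := by
      simp only [qBinomWeight, qBinom_zero_right hq0 hq1]
    rw [sum_range_succ', sum_range_succ, sum_congr rfl hpascal, sum_add_distrib, ← mul_sum,
      htop, hbot, oplus_succ, ← ih]
    linear_combination (-1 : ℝ) * sum_range_succ' (qBinomWeight q η m) m
      - η * q ^ m * sum_range_succ (qBinomWeight q η m) m

lemma sum_qBinomPmf (hq0 : 0 ≤ q) (hq1 : q < 1) {η : ℝ} (hη : 0 ≤ η) (m : ℕ) :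
    ∑ x ∈ range (m + 1), qBinomPmf q η m x = 1 := by
  simp only [qBinomPmf]
  rw [← sum_div, sum_qBinomWeight hq0 hq1, div_self (oplus_pos hq0 hη m).ne']

lemma sum_qInt_mul_qBinomPmf (hq0 : 0 ≤ q) (hq1 : q < 1) {η : ℝ} (hη : 0 ≤ η) (m : ℕ) :
    ∑ x ∈ range (m + 1), qInt q x * qBinomPmf q η m x = η * qInt q m / (1 + η) := by
  cases m with
  | zero => simp [qInt_zero]
  | succ m =>
    have habsorb : ∀ x ∈ range (m + 1), qInt q (x + 1 : ℕ) * qBinomWeight q η (m + 1) (x + 1)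
        = η * qInt q (m + 1 : ℕ) * qBinomWeight q (η * q) m x := by
      intro x hx
      rw [qBinomWeight, ← mul_assoc, ← mul_assoc,
        qInt_succ_mul_qBinom_succ_succ hq0 hq1 (Nat.lt_succ_iff.mp (mem_range.mp hx)), qBinomWeight,
        bb_succ]
      ring
    have hO := (oplus_pos hq0 (mul_nonneg hη hq0) m).ne'
    calc ∑ x ∈ range (m + 1 + 1), qInt q x * qBinomPmf q η (m + 1) x
        = (∑ x ∈ range (m + 1 + 1), qInt q x * qBinomWeight q η (m + 1) x)
            / oplus q η (m + 1) := by
          simp only [qBinomPmf, mul_div_assoc, sum_div]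
      _ = η * qInt q (m + 1 : ℕ) * oplus q (η * q) m / ((1 + η) * oplus q (η * q) m) := by
          rw [sum_range_succ', sum_congr rfl habsorb, ← mul_sum, sum_qBinomWeight hq0 hq1,
            oplus_succ']
          simp [qInt_zero]
      _ = η * qInt q (m + 1 : ℕ) / (1 + η) := by
          field_simp

lemma sum_mul_qInt_sub_mul_qBinomPmf (hq0 : 0 ≤ q) (hq1 : q < 1) {η : ℝ} (hη : 0 ≤ η)
    (g : ℕ → ℝ) (m : ℕ) :
    ∑ x ∈ range (m + 2), g x * (qInt q (m + 1 - x : ℕ) * qBinomPmf q η (m + 1) x)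
      = qInt q (m + 1 : ℕ) / (1 + η * q ^ m) * ∑ x ∈ range (m + 1), g x * qBinomPmf q η m x := by
  have hcompl : ∀ x ∈ range (m + 1), qInt q (m + 1 - x : ℕ) * qBinomPmf q η (m + 1) x
      = qInt q (m + 1 : ℕ) / (1 + η * q ^ m) * qBinomPmf q η m x := by
    intro x hx
    have hO := (oplus_pos hq0 hη m).ne'
    have hlast : 1 + η * q ^ m ≠ 0 := by positivity
    rw [qBinomPmf, qBinomPmf, qBinomWeight, qBinomWeight, ← mul_div_assoc, ← mul_assoc,
      ← mul_assoc, qInt_sub_mul_qBinom_succ hq0 hq1 (Nat.lt_succ_iff.mp (mem_range.mp hx)),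
      oplus_succ]
    field_simp
  rw [sum_range_succ, Nat.sub_self, mul_sum]
  simp only [Nat.cast_zero, qInt_zero, zero_mul, mul_zero, add_zero]
  refine sum_congr rfl fun x hx => ?_
  rw [hcompl x hx]
  ring

lemma qTri_eq_qBinom_mul_qBinom (hq0 : 0 ≤ q) (hq1 : q < 1) (n y1 y2 : ℕ) :
    qTri q n y1 y2 = qBinom q n y1 * qBinom q (n - y1) y2 := by
  have := (qFact_pos hq0 hq1 (n - y1)).ne'
  have := (qFact_pos hq0 hq1 y1).ne'
  have := (qFact_pos hq0 hq1 y2).ne'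
  have := (qFact_pos hq0 hq1 (n - y1 - y2)).ne'
  rw [qTri, qBinom, qBinom]
  field_simp

lemma fpmf_eq_qBinomPmf_mul_qBinomPmf (hq0 : 0 ≤ q) (hq1 : q < 1) (a1 a2 : ℝ) (n y1 y2 : ℕ) :
    fpmf q a1 a2 n y1 y2 = qBinomPmf q a1 n y1 * qBinomPmf q a2 (n - y1) y2 := by
  rw [fpmf, qTri_eq_qBinom_mul_qBinom hq0 hq1, qBinomPmf, qBinomPmf, qBinomWeight, qBinomWeight,
    pow_add]
  ring

lemma sum_fpmf_right (hq0 : 0 ≤ q) (hq1 : q < 1) (a1 : ℝ) {a2 : ℝ} (ha2 : 0 ≤ a2) (n y1 : ℕ) :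
    ∑ y2 ∈ range (n - y1 + 1), fpmf q a1 a2 n y1 y2 = qBinomPmf q a1 n y1 := by
  simp only [fpmf_eq_qBinomPmf_mul_qBinomPmf hq0 hq1]
  rw [← mul_sum, sum_qBinomPmf hq0 hq1 ha2, mul_one]

lemma sum_qInt_mul_fpmf_right (hq0 : 0 ≤ q) (hq1 : q < 1) (a1 : ℝ) {a2 : ℝ} (ha2 : 0 ≤ a2)
    (n y1 : ℕ) :
    ∑ y2 ∈ range (n - y1 + 1), qInt q y2 * fpmf q a1 a2 n y1 y2
      = a2 / (1 + a2) * (qInt q (n - y1 : ℕ) * qBinomPmf q a1 n y1) := by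
  simp only [fpmf_eq_qBinomPmf_mul_qBinomPmf hq0 hq1, mul_left_comm _ (qBinomPmf q a1 n y1)]
  rw [← mul_sum, sum_qInt_mul_qBinomPmf hq0 hq1 ha2]
  ring

end QBinomialDistribution

theorem stmt4_general (q : ℝ) (hq0 : 0 < q) (hq1 : q < 1) (n : ℕ) (hn : 1 ≤ n) (α1 α2 : ℝ)
    (hα1 : 0 < α1) (hα2 : 0 < α2) :
    (∑ y1 ∈ Finset.range (n + 1), ∑ y2 ∈ Finset.range (n - y1 + 1),
        qInt q (y1 : ℤ) * qInt q (y2 : ℤ) * fpmf q α1 α2 n y1 y2)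
    - (∑ y1 ∈ Finset.range (n + 1), ∑ y2 ∈ Finset.range (n - y1 + 1),
        qInt q (y1 : ℤ) * fpmf q α1 α2 n y1 y2)
      * (∑ y1 ∈ Finset.range (n + 1), ∑ y2 ∈ Finset.range (n - y1 + 1),
        qInt q (y2 : ℤ) * fpmf q α1 α2 n y1 y2)
      = α1 * α2 * qInt q (n : ℤ) * (qInt q ((n : ℤ) - 1) - qInt q (n : ℤ)) /
        ((1 + α1) * (1 + α2) * (1 + α1 * q ^ (n - 1))) := by
  obtain ⟨m, rfl⟩ := Nat.exists_eq_add_of_le' hn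
  have hE1 : ∑ y1 ∈ range (m + 1 + 1), ∑ y2 ∈ range (m + 1 - y1 + 1),
      qInt q y1 * fpmf q α1 α2 (m + 1) y1 y2 = α1 * qInt q (m + 1 : ℕ) / (1 + α1) := by
    simp only [← mul_sum, sum_fpmf_right hq0.le hq1 α1 hα2.le]
    exact sum_qInt_mul_qBinomPmf hq0.le hq1 hα1.le (m + 1)
  have hE2 : ∑ y1 ∈ range (m + 1 + 1), ∑ y2 ∈ range (m + 1 - y1 + 1),
      qInt q y2 * fpmf q α1 α2 (m + 1) y1 y2
        = α2 / (1 + α2) * (qInt q (m + 1 : ℕ) / (1 + α1 * q ^ m)) := by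
    simp only [sum_qInt_mul_fpmf_right hq0.le hq1 α1 hα2.le, ← mul_sum]
    congr 1
    simpa [sum_qBinomPmf hq0.le hq1 hα1.le] using
      sum_mul_qInt_sub_mul_qBinomPmf hq0.le hq1 hα1.le (fun _ => 1) m
  have hE12 : ∑ y1 ∈ range (m + 1 + 1), ∑ y2 ∈ range (m + 1 - y1 + 1),
      qInt q y1 * qInt q y2 * fpmf q α1 α2 (m + 1) y1 y2
        = α2 / (1 + α2) * (qInt q (m + 1 : ℕ) / (1 + α1 * q ^ m) * (α1 * qInt q m / (1 + α1))) := by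
    simp only [mul_assoc, ← mul_sum, sum_qInt_mul_fpmf_right hq0.le hq1 α1 hα2.le,
      mul_left_comm _ (α2 / (1 + α2))]
    rw [sum_mul_qInt_sub_mul_qBinomPmf hq0.le hq1 hα1.le, sum_qInt_mul_qBinomPmf hq0.le hq1 hα1.le]
  have hpred : ((m + 1 : ℕ) : ℤ) - 1 = m := by push_cast; ring
  rw [hE1, hE2, hE12, hpred, Nat.add_sub_cancel]
  field_simp

theorem stmt4 (q : ℝ) (hq0 : 0 < q) (hq1 : q < 1) (n : ℕ) (hn : 1 ≤ n) (α1 α2 : ℝ)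
    (hα1 : 0 < α1) (hα1' : α1 < 1) (hα2 : 0 < α2) (hα2' : α2 < 1) :
    (∑ y1 ∈ Finset.range (n + 1), ∑ y2 ∈ Finset.range (n - y1 + 1),
        qInt q (y1 : ℤ) * qInt q (y2 : ℤ) * fpmf q α1 α2 n y1 y2)
    - (∑ y1 ∈ Finset.range (n + 1), ∑ y2 ∈ Finset.range (n - y1 + 1),
        qInt q (y1 : ℤ) * fpmf q α1 α2 n y1 y2)
      * (∑ y1 ∈ Finset.range (n + 1), ∑ y2 ∈ Finset.range (n - y1 + 1),
        qInt q (y2 : ℤ) * fpmf q α1 α2 n y1 y2)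
      = α1 * α2 * qInt q (n : ℤ) * (qInt q ((n : ℤ) - 1) - qInt q (n : ℤ)) /
        ((1 + α1) * (1 + α2) * (1 + α1 * q ^ (n - 1))) :=
  stmt4_general q hq0 hq1 n hn α1 α2 hα1 hα2
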